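/- arXiv:2009.11062 — 2 statements merged into one kernel-verified Lean document; each statement's English description precedes it below -/
import Mathlib

section
/- Let g, r be natural numbers with r ≤ 2g, and let λ_0, …, λ_{2g+1} be distinct complex numbers. If x = (x_0, …, x_{2g+1}) ∈ ℂ^{2g+2} is a nonzero vector satisfying Σ_{j=0}^{2g+1} λ_j^i x_j^2 = 0 for every i = 0, …, r, then the set {j : x_j ≠ 0} has cardinality at least r + 2. -/
open Finset

variable {R ι : Type*} [CommRing R] [IsDomain R]

theorem Finset.eq_zero_of_forall_sum_pow_mul_eq_zero {s : Finset ι} {f v : ι → R}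
    (hf : Set.InjOn f s) (hfv : ∀ i < #s, ∑ j ∈ s, f j ^ i * v j = 0) :
    ∀ j ∈ s, v j = 0 := by
  set e := s.equivFin
  have hvanish : (fun k => v (e.symm k)) = 0 := by
    refine Matrix.eq_zero_of_forall_pow_sum_mul_pow_eq_zero (f := fun k => f (e.symm k))
      (fun a b hab => e.symm.injective (Subtype.ext (hf (e.symm a).2 (e.symm b).2 hab)))
      fun i => ?_
    have hi := hfv i i.2
    rw [← sum_coe_sort s, ← e.symm.sum_comp] at hi
    simpa only [mul_comm] using hi
  intro j hj
  simpa [e] using congrFun hvanish (e ⟨j, hj⟩)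

theorem card_support_gt_of_forall_sum_pow_mul_eq_zero [Fintype ι] [DecidableEq R] {f v : ι → R}
    (hf : Function.Injective f) (hv : v ≠ 0) (m : ℕ)
    (hfv : ∀ i < m, ∑ j, f j ^ i * v j = 0) : m < #{j | v j ≠ 0} := by
  by_contra! hcard
  obtain ⟨j, hj⟩ : ∃ j, v j ≠ 0 := Function.ne_iff.mp hv
  refine hj (eq_zero_of_forall_sum_pow_mul_eq_zero (s := {j | v j ≠ 0}) hf.injOn
    (fun i hi => ?_) j (mem_filter.mpr ⟨mem_univ j, hj⟩))
  rw [sum_filter_of_ne fun k _ hk => right_ne_zero_of_mul hk]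
  exact hfv i (hi.trans_le hcard)

theorem support_bound_of_common_zero_general (g r : ℕ)
    (lam : Fin (2 * g + 2) → ℂ) (hlam : Function.Injective lam)
    (x : Fin (2 * g + 2) → ℂ) (hx : x ≠ 0)
    (hq : ∀ i : ℕ, i ≤ r → ∑ j, lam j ^ i * x j ^ 2 = 0) :
    r + 2 ≤ (Finset.univ.filter fun j => x j ≠ 0).card := by
  have hsq : (fun j => x j ^ 2) ≠ 0 := fun h =>
    hx (funext fun j => pow_eq_zero_iff two_ne_zero |>.mp (congrFun h j))
  have := card_support_gt_of_forall_sum_pow_mul_eq_zero hlam hsq (r + 1)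
    fun i hi => hq i (Nat.lt_succ_iff.mp hi)
  simpa only [ne_eq, pow_eq_zero_iff two_ne_zero, Nat.succ_le_iff] using this

/-- A nonzero common zero of the quadrics `q_i(x) = ∑_j λ_j^i x_j^2`,
`i = 0, …, r`, with the `λ_j` distinct, has at least `r + 2` nonzero coordinates. -/
theorem support_bound_of_common_zero (g r : ℕ) (hr : r ≤ 2 * g)
    (lam : Fin (2 * g + 2) → ℂ) (hlam : Function.Injective lam)
    (x : Fin (2 * g + 2) → ℂ) (hx : x ≠ 0)
    (hq : ∀ i : ℕ, i ≤ r → ∑ j, lam j ^ i * x j ^ 2 = 0) :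
    r + 2 ≤ (Finset.univ.filter fun j => x j ≠ 0).card :=
  support_bound_of_common_zero_general g r lam hlam x hx hq
end

section
/- Let g, r be natural numbers with r ≤ 2g, and let λ_0, …, λ_{2g+1} be distinct complex numbers. If x ∈ ℂ^{2g+2} is a nonzero vector satisfying Σ_{j=0}^{2g+1} λ_j^i x_j^2 = 0 for every i = 0, …, r, then the (r+1) × (2g+2) matrix M with entries M_{i,j} = λ_j^i · x_j has rank exactly r + 1. -/
/-!
Both halves are Vandermonde arguments. Put `S = {j | x j ≠ 0}`. The conditions say that the
weights `x_j²`, `j ∈ S`, are annihilated by the rows `(λ_j^i)_{j ∈ S}`, `i ≤ r`, of a Vandermonde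
matrix; if `#S ≤ r + 1`, a square Vandermonde submatrix would force all these weights to vanish,
so `#S ≥ r + 2`. A linear relation `∑ c_i λ_j^i x_j = 0` among the rows of `M` says that the
polynomial `∑ c_i X^i` of degree `≤ r` vanishes at the `#S > r + 1` distinct points `λ_j`, `j ∈ S`;
so all `c_i = 0`.
-/

open Finset

namespace Matrix

variable {R ι : Type*} [CommRing R] [IsDomain R] {lam : ι → R} {s : Finset ι}

theorem eq_zero_of_forall_sum_mul_pow_eq_zero_of_le_card {n : ℕ} (hlam : Set.InjOn lam s)
    (hn : n ≤ #s) {c : Fin n → R} (hc : ∀ j ∈ s, ∑ i, c i * lam j ^ (i : ℕ) = 0) : c = 0 := by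
  obtain ⟨t, hts, rfl⟩ := exists_subset_card_eq hn
  let e := t.equivFin.symm
  refine eq_zero_of_forall_index_sum_mul_pow_eq_zero (f := fun k ↦ lam (e k)) ?_
    fun k ↦ hc _ (hts (e k).2)
  exact fun k l hkl ↦ e.injective <| Subtype.ext <| hlam (hts (e k).2) (hts (e l).2) hkl

theorem eq_zero_of_forall_sum_mul_pow_eq_zero_of_lt_card {w : ι → R} (hlam : Set.InjOn lam s)
    (hw : ∀ i < #s, ∑ j ∈ s, w j * lam j ^ i = 0) : ∀ j ∈ s, w j = 0 := by
  let e := s.equivFin.symm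
  have hsum (F : ι → R) : ∑ k, F (e k) = ∑ j ∈ s, F j :=
    (e.sum_comp fun j : s ↦ F j).trans (sum_coe_sort s F)
  have hinj : Function.Injective fun k ↦ lam (e k) := fun k l hkl ↦
    e.injective <| Subtype.ext <| hlam (e k).2 (e l).2 hkl
  have hzero := eq_zero_of_forall_pow_sum_mul_pow_eq_zero (v := fun k ↦ w (e k)) hinj
    fun i ↦ (hsum _).trans (hw i i.2)
  intro j hj
  simpa [e] using congrFun hzero (s.equivFin ⟨j, hj⟩)

end Matrix

section

variable {K ι : Type*} [Field K] [Fintype ι] [DecidableEq K] {lam : ι → K}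

theorem lt_card_support_of_moments_eq_zero {r : ℕ} (hlam : Function.Injective lam) {w : ι → K}
    (hw : w ≠ 0) (hmom : ∀ i ≤ r, ∑ j, lam j ^ i * w j = 0) : r + 1 < #{j | w j ≠ 0} := by
  by_contra! hcard
  apply hw
  funext j
  by_cases hj : w j = 0
  · exact hj
  refine Matrix.eq_zero_of_forall_sum_mul_pow_eq_zero_of_lt_card (s := {j | w j ≠ 0})
    hlam.injOn (fun i hi ↦ ?_) j (by simpa using hj)
  rw [sum_filter_of_ne fun j _ h ↦ left_ne_zero_of_mul h]
  simpa only [mul_comm] using hmom i (by omega)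

theorem linearIndependent_row_pow_mul {n : ℕ} (hlam : Function.Injective lam) {x : ι → K}
    (hn : n ≤ #{j | x j ≠ 0}) :
    LinearIndependent K (Matrix.of fun (i : Fin n) j ↦ lam j ^ (i : ℕ) * x j).row := by
  rw [Fintype.linearIndependent_iff]
  intro c hc
  refine congrFun (Matrix.eq_zero_of_forall_sum_mul_pow_eq_zero_of_le_card hlam.injOn hn ?_)
  intro j hj
  have hcol : (∑ i, c i * lam j ^ (i : ℕ)) * x j = 0 := by
    simpa [sum_mul, mul_assoc] using congrFun hc j
  exact (mul_eq_zero.mp hcol).resolve_right (by simpa using hj)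

end

theorem jacobian_full_rank_general (g r : ℕ)
    (lam : Fin (2 * g + 2) → ℂ) (hlam : Function.Injective lam)
    (x : Fin (2 * g + 2) → ℂ) (hx : x ≠ 0)
    (hq : ∀ i : ℕ, i ≤ r → ∑ j, lam j ^ i * x j ^ 2 = 0) :
    (Matrix.of fun (i : Fin (r + 1)) (j : Fin (2 * g + 2)) =>
      lam j ^ (i : ℕ) * x j).rank = r + 1 := by
  classical
  have hx2 : x ^ 2 ≠ 0 := pow_ne_zero 2 hx
  have hcard := lt_card_support_of_moments_eq_zero hlam hx2 hq
  simp only [Pi.pow_apply, ne_eq, pow_eq_zero_iff two_ne_zero] at hcard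
  simpa using (linearIndependent_row_pow_mul hlam hcard.le).rank_matrix

/-- At any nonzero common zero `x` of the quadrics `q_i(x) = ∑_j λ_j^i x_j^2`,
`i = 0, …, r` (with the `λ_j` distinct), the `(r+1) × (2g+2)` matrix `M_{i,j} = λ_j^i x_j`
has rank exactly `r + 1`. -/
theorem jacobian_full_rank (g r : ℕ) (hr : r ≤ 2 * g)
    (lam : Fin (2 * g + 2) → ℂ) (hlam : Function.Injective lam)
    (x : Fin (2 * g + 2) → ℂ) (hx : x ≠ 0)
    (hq : ∀ i : ℕ, i ≤ r → ∑ j, lam j ^ i * x j ^ 2 = 0) :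
    (Matrix.of fun (i : Fin (r + 1)) (j : Fin (2 * g + 2)) =>
      lam j ^ (i : ℕ) * x j).rank = r + 1 :=
  jacobian_full_rank_general g r lam hlam x hx hq
end
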